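/- Let 0 < ℓ₂ ≤ ℓ₁ < √3 · ℓ₂. Then there exist h₁ ∈ (0,ℓ₁) and h₂ ∈ (0,ℓ₂) such that simultaneously 0 < π²/(ℓ₁+h₁)² < π²/(ℓ₂+h₂)² < π²/ℓ₁² and π²/(ℓ₂+h₂)² < π²/(ℓ₁+h₁)² + π²/(ℓ₂+h₂)² < π²/ℓ₁². -/

import Mathlib

/-!
Write `a = ℓ₁ + h₁` and `b = ℓ₂ + h₂`. All the required inequalities reduce to
`ℓ₁ < b < a` and `π²/a² + π²/b² < π²/ℓ₁²`, with `a < 2ℓ₁` and `b < 2ℓ₂`. At the corner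
`a = 2ℓ₁`, `b = 2ℓ₂` the last inequality reads `ℓ₁² < 3ℓ₂²`, so by continuity it survives
when first `b` and then `a` are moved slightly to the left of the corner.
-/

open Real Filter Topology

lemma exists_mem_Ioo_lt_of_continuousAt {f : ℝ → ℝ} {y x₀ c : ℝ} (hy : y < x₀)
    (hf : ContinuousAt f x₀) (hc : f x₀ < c) : ∃ x ∈ Set.Ioo y x₀, f x < c :=
  (Eventually.and (Ioo_mem_nhdsLT hy)
    ((hf.mono_left nhdsWithin_le_nhds).eventually (gt_mem_nhds hc))).exists

lemma continuousAt_const_div_sq_add {c d x₀ : ℝ} (hx₀ : x₀ ≠ 0) :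
    ContinuousAt (fun x : ℝ => c / x ^ 2 + d) x₀ :=
  ((continuousAt_const.div (continuousAt_id.pow 2) (pow_ne_zero 2 hx₀)).add
    continuousAt_const)

lemma div_sq_lt_div_sq {c x y : ℝ} (hc : 0 < c) (hx : 0 < x) (hxy : x < y) :
    c / y ^ 2 < c / x ^ 2 :=
  div_lt_div_of_pos_left hc (pow_pos hx 2) (pow_lt_pow_left₀ hxy hx.le two_ne_zero)

lemma div_sq_two_mul_add_div_sq_two_mul_lt {c x y : ℝ} (hc : 0 < c) (hx : 0 < x) (hy : 0 < y)
    (h : x ^ 2 < 3 * y ^ 2) : c / (2 * x) ^ 2 + c / (2 * y) ^ 2 < c / x ^ 2 := by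
  rw [div_add_div _ _ (by positivity) (by positivity), div_lt_div_iff₀ (by positivity)
    (by positivity)]
  nlinarith [mul_pos (mul_pos hc (pow_pos hx 2)) (pow_pos hx 2)]

/-- If 0 < ℓ₂ ≤ ℓ₁ < √3·ℓ₂, then there exist h₁ ∈ (0,ℓ₁) and
h₂ ∈ (0,ℓ₂) satisfying simultaneously relation (NEW),
0 < π²/(ℓ₁+h₁)² < π²/(ℓ₂+h₂)² < π²/ℓ₁², and relation (mubold),
π²/(ℓ₂+h₂)² < π²/(ℓ₁+h₁)² + π²/(ℓ₂+h₂)² < π²/ℓ₁². -/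
theorem exists_shifts_ordering_with_gap_eigenvalue
    (ℓ₁ ℓ₂ : ℝ) (hℓ₂ : 0 < ℓ₂) (hℓ : ℓ₂ ≤ ℓ₁) (hupper : ℓ₁ < Real.sqrt 3 * ℓ₂) :
    ∃ h₁ ∈ Set.Ioo 0 ℓ₁, ∃ h₂ ∈ Set.Ioo 0 ℓ₂,
      (0 < π ^ 2 / (ℓ₁ + h₁) ^ 2 ∧
       π ^ 2 / (ℓ₁ + h₁) ^ 2 < π ^ 2 / (ℓ₂ + h₂) ^ 2 ∧
       π ^ 2 / (ℓ₂ + h₂) ^ 2 < π ^ 2 / ℓ₁ ^ 2) ∧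
      (π ^ 2 / (ℓ₂ + h₂) ^ 2 < π ^ 2 / (ℓ₁ + h₁) ^ 2 + π ^ 2 / (ℓ₂ + h₂) ^ 2 ∧
       π ^ 2 / (ℓ₁ + h₁) ^ 2 + π ^ 2 / (ℓ₂ + h₂) ^ 2 < π ^ 2 / ℓ₁ ^ 2) := by
  have hℓ₁ : 0 < ℓ₁ := hℓ₂.trans_le hℓ
  have hπ : 0 < π ^ 2 := by positivity
  have hsq : ℓ₁ ^ 2 < 3 * ℓ₂ ^ 2 := by
    simpa [mul_pow] using pow_lt_pow_left₀ hupper hℓ₁.le two_ne_zero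
  have hcorner := div_sq_two_mul_add_div_sq_two_mul_lt hπ hℓ₁ hℓ₂ hsq
  obtain ⟨b, ⟨hℓ₁b, hb⟩, hb_gap⟩ := exists_mem_Ioo_lt_of_continuousAt
    (f := fun b => π ^ 2 / b ^ 2 + π ^ 2 / (2 * ℓ₁) ^ 2) (y := ℓ₁) (x₀ := 2 * ℓ₂)
    (c := π ^ 2 / ℓ₁ ^ 2) (by nlinarith)
    (continuousAt_const_div_sq_add (by positivity)) (by linarith)
  obtain ⟨a, ⟨hba, ha⟩, hab_gap⟩ := exists_mem_Ioo_lt_of_continuousAt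
    (f := fun a => π ^ 2 / a ^ 2 + π ^ 2 / b ^ 2) (y := b) (x₀ := 2 * ℓ₁)
    (c := π ^ 2 / ℓ₁ ^ 2) (by linarith)
    (continuousAt_const_div_sq_add (by positivity)) (by linarith)
  refine ⟨a - ℓ₁, ⟨by linarith, by linarith⟩, b - ℓ₂, ⟨by linarith, by linarith⟩, ?_⟩
  simp only [add_sub_cancel] at hab_gap ⊢
  have hb₀ : 0 < b := hℓ₁.trans hℓ₁b
  have ha₀ : 0 < a := hb₀.trans hba
  exact ⟨⟨by positivity, div_sq_lt_div_sq hπ hb₀ hba, div_sq_lt_div_sq hπ hℓ₁ hℓ₁b⟩,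
    lt_add_of_pos_left _ (by positivity), hab_gap⟩
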